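/- Let H_{|∇|}(f,g) := |∇|(fg) − f|∇|g − (|∇|f)g, where |∇| acts componentwise, and extend to ℝ³-valued maps with f replaced by a ∧_L (Lorentzian cross product in the first slot). Then for ℝ³-valued Schwartz maps a, b, c one has the integration-by-parts identity ∫_{ℝᵈ} ⟨H_{|∇|}(a ∧_L, b), c⟩_L dx = ∫_{ℝᵈ} ⟨H_{|∇|}(a ∧_L, c), b⟩_L dx + 2 ∫_{ℝᵈ} ⟨(|∇|a) ∧_L c, b⟩_L dx. -/

import Mathlib

open MeasureTheory

/-- The Lorentzian inner product on ℝ³: ⟨a,b⟩_L = −a₀b₀ + a₁b₁ + a₂b₂. -/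
def lorentzInner (a b : Fin 3 → ℝ) : ℝ := -(a 0 * b 0) + a 1 * b 1 + a 2 * b 2

/-- The Lorentzian cross product: a ∧_L b = diag(−1,1,1)(a ∧ b). -/
def lorentzCross (a b : Fin 3 → ℝ) : Fin 3 → ℝ :=
  fun i => (if i = 0 then (-1 : ℝ) else 1) * (crossProduct a b) i

/-- The half-Laplacian `|∇| f = 𝓕⁻¹(|ξ| 𝓕 f)` of a real-valued function on `ℝᵈ`. -/
noncomputable def halfLap {d : ℕ} (f : EuclideanSpace ℝ (Fin d) → ℝ) :
    EuclideanSpace ℝ (Fin d) → ℝ :=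
  fun x => (FourierTransformInv.fourierInv
    (fun ξ => ((‖ξ‖ : ℝ) : ℂ) * FourierTransform.fourier (fun y => ((f y : ℝ) : ℂ)) ξ) x).re

/-- `|∇|` acting componentwise on an ℝ³-valued map. -/
noncomputable def vecHalfLap {d : ℕ} (u : EuclideanSpace ℝ (Fin d) → Fin 3 → ℝ) :
    EuclideanSpace ℝ (Fin d) → Fin 3 → ℝ :=
  fun x i => halfLap (fun y => u y i) x

/-- The Leibniz defect of `|∇|` with a Lorentzian cross product in the first slot:
`H_{|∇|}(a ∧_L, b) := |∇|(a ∧_L b) − (|∇|a) ∧_L b − a ∧_L (|∇|b)`. -/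
noncomputable def crossLeibnizDefect {d : ℕ}
    (a b : EuclideanSpace ℝ (Fin d) → Fin 3 → ℝ) :
    EuclideanSpace ℝ (Fin d) → Fin 3 → ℝ :=
  fun x => vecHalfLap (fun y => lorentzCross (a y) (b y)) x
    - lorentzCross (vecHalfLap a x) (b x) - lorentzCross (a x) (vecHalfLap b x)

/-!
Pointwise, the triple-product identity `⟨p ∧_L q, r⟩_L = ⟨p, q ∧_L r⟩_L` and the antisymmetry of
`∧_L` give `⟨H(a ∧_L, b), c⟩_L = ⟨|∇|(a ∧_L b), c⟩_L - ⟨|∇|a, b ∧_L c⟩_L + ⟨|∇|b, a ∧_L c⟩_L`, and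
self-adjointness of `|∇|` turns the first term into `⟨|∇|c, a ∧_L b⟩_L` after integration.
Exchanging `b` and `c` then swaps the first and last integrals and flips the sign of the middle
one, whose double is the correction term `2 ∫ ⟨(|∇|a) ∧_L c, b⟩_L`.
-/

open MeasureTheory FourierTransform SchwartzMap

section FourierIntegrable

variable {V : Type*} [NormedAddCommGroup V] [InnerProductSpace ℝ V] [FiniteDimensional ℝ V]
  [MeasurableSpace V] [BorelSpace V]

theorem continuous_fourierInv_of_integrable {q : V → ℂ} (hq : Integrable q) :
    Continuous (𝓕⁻ q) :=
  VectorFourier.fourierIntegral_continuous Real.continuous_fourierChar continuous_inner.neg hq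

theorem norm_fourierInv_le_integral_norm (q : V → ℂ) (x : V) : ‖𝓕⁻ q x‖ ≤ ∫ ξ, ‖q ξ‖ :=
  VectorFourier.norm_fourierIntegral_le_integral_norm _ _ _ _ _

theorem integrable_fourierInv_mul {q g : V → ℂ} (hq : Integrable q) (hg : Integrable g) :
    Integrable fun x => 𝓕⁻ q x * g x :=
  hg.bdd_mul (continuous_fourierInv_of_integrable hq).aestronglyMeasurable
    (.of_forall (norm_fourierInv_le_integral_norm q))

theorem integral_fourierInv_mul_eq_of_integrable {q g : V → ℂ} (hq : Integrable q)
    (hg : Integrable g) : ∫ x, 𝓕⁻ q x * g x = ∫ ξ, q ξ * 𝓕⁻ g ξ := by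
  have hflip : (-innerₗ V).flip = -innerₗ V := by
    ext x y
    simp [real_inner_comm]
  have h := VectorFourier.integral_fourierIntegral_smul_eq_flip
    (L := -innerₗ V) Real.continuous_fourierChar continuous_inner.neg hq hg
  rw [hflip] at h
  exact h

end FourierIntegrable

section HalfLaplacian

variable {d : ℕ}

noncomputable def halfLapSymbol (f : EuclideanSpace ℝ (Fin d) → ℝ) :
    EuclideanSpace ℝ (Fin d) → ℂ :=
  fun ξ => (‖ξ‖ : ℂ) * 𝓕 (fun y => (f y : ℂ)) ξ

theorem halfLap_eq_re_fourierInv (f : EuclideanSpace ℝ (Fin d) → ℝ) :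
    halfLap f = fun x => (𝓕⁻ (halfLapSymbol f) x).re :=
  rfl

theorem integrable_halfLapSymbol (f : 𝓢(EuclideanSpace ℝ (Fin d), ℝ)) :
    Integrable (halfLapSymbol f) := by
  set F : 𝓢(EuclideanSpace ℝ (Fin d), ℂ) := f.postcompCLM (𝕜 := ℝ) Complex.ofRealCLM
  have hF : halfLapSymbol f = fun ξ => (‖ξ‖ : ℂ) * 𝓕 F ξ := rfl
  rw [hF]
  refine ((𝓕 F).integrable_pow_mul volume 1).mono' (by fun_prop) (.of_forall fun ξ => ?_)
  simp

theorem integrable_halfLap_mul (f g : 𝓢(EuclideanSpace ℝ (Fin d), ℝ)) :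
    Integrable fun x => halfLap f x * g x := by
  have hq := integrable_halfLapSymbol f
  refine g.integrable.bdd_mul (c := ∫ ξ, ‖halfLapSymbol f ξ‖)
    (Complex.continuous_re.comp (continuous_fourierInv_of_integrable hq)).aestronglyMeasurable
    (.of_forall fun x => ?_)
  exact (Complex.abs_re_le_norm _).trans (norm_fourierInv_le_integral_norm _ x)

theorem integral_halfLap_mul (f g : 𝓢(EuclideanSpace ℝ (Fin d), ℝ)) :
    ∫ x, halfLap f x * g x = (∫ ξ, halfLapSymbol f ξ * 𝓕⁻ (fun y => (g y : ℂ)) ξ).re := by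
  have hq := integrable_halfLapSymbol f
  have hg : Integrable fun y => (g y : ℂ) := g.integrable.ofReal
  calc ∫ x, halfLap f x * g x
      = ∫ x, (𝓕⁻ (halfLapSymbol f) x * (g x : ℂ)).re := by
        simp only [halfLap_eq_re_fourierInv, Complex.re_mul_ofReal]
    _ = (∫ x, 𝓕⁻ (halfLapSymbol f) x * (g x : ℂ)).re :=
        integral_re (integrable_fourierInv_mul hq hg)
    _ = _ := by rw [integral_fourierInv_mul_eq_of_integrable hq hg]

/-- By `integral_halfLap_mul` both sides are `Re ∫ |ξ| 𝓕f(ξ) 𝓕g(-ξ) dξ`, up to the substitution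
`ξ ↦ -ξ`. -/
theorem integral_halfLap_mul_comm (f g : 𝓢(EuclideanSpace ℝ (Fin d), ℝ)) :
    ∫ x, halfLap f x * g x = ∫ x, halfLap g x * f x := by
  rw [integral_halfLap_mul, integral_halfLap_mul, ← integral_neg_eq_self]
  congr 2
  ext ξ
  simp only [halfLapSymbol, Real.fourierInv_eq_fourier_neg, norm_neg, neg_neg]
  ring

end HalfLaplacian

section SchwartzFunctions

variable {E : Type*} [NormedAddCommGroup E] [NormedSpace ℝ E]

def IsSchwartz (f : E → ℝ) : Prop := ∃ F : 𝓢(E, ℝ), f = ⇑F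

theorem IsSchwartz.sub {f g : E → ℝ} (hf : IsSchwartz f) (hg : IsSchwartz g) :
    IsSchwartz fun x => f x - g x := by
  obtain ⟨F, rfl⟩ := hf
  obtain ⟨G, rfl⟩ := hg
  exact ⟨F - G, rfl⟩

theorem IsSchwartz.mul {f g : E → ℝ} (hf : IsSchwartz f) (hg : IsSchwartz g) :
    IsSchwartz fun x => f x * g x := by
  obtain ⟨F, rfl⟩ := hf
  obtain ⟨G, rfl⟩ := hg
  exact ⟨pairing (ContinuousLinearMap.mul ℝ ℝ) F G, rfl⟩

theorem isSchwartz_lorentzCross {u v : E → Fin 3 → ℝ} (hu : ∀ i, IsSchwartz fun x => u x i)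
    (hv : ∀ i, IsSchwartz fun x => v x i) (i : Fin 3) :
    IsSchwartz fun x => lorentzCross (u x) (v x) i := by
  fin_cases i <;> simp [lorentzCross, cross_apply]
  · exact ((hu 2).mul (hv 1)).sub ((hu 1).mul (hv 2))
  · exact ((hu 2).mul (hv 0)).sub ((hu 0).mul (hv 2))
  · exact ((hu 0).mul (hv 1)).sub ((hu 1).mul (hv 0))

end SchwartzFunctions

section LorentzAlgebra

variable (p q r : Fin 3 → ℝ)

theorem lorentzInner_eq_sum :
    lorentzInner p q = ∑ i, (if i = 0 then (-1 : ℝ) else 1) * (p i * q i) := by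
  simp [lorentzInner, Fin.sum_univ_three]

theorem lorentzInner_neg_right : lorentzInner p (-q) = -lorentzInner p q := by
  simp only [lorentzInner, Pi.neg_apply]
  ring

theorem lorentzCross_anticomm : lorentzCross q p = -lorentzCross p q := by
  ext i
  fin_cases i <;> simp [lorentzCross, cross_apply] <;> ring

theorem lorentzInner_lorentzCross :
    lorentzInner (lorentzCross p q) r = lorentzInner p (lorentzCross q r) := by
  simp [lorentzInner, lorentzCross, cross_apply]
  ring

end LorentzAlgebra

theorem lorentzInner_sub_lorentzCross_sub_lorentzCross (h a a' b b' c : Fin 3 → ℝ) :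
    lorentzInner (h - lorentzCross a' b - lorentzCross a b') c
      = lorentzInner h c - lorentzInner a' (lorentzCross b c)
        + lorentzInner b' (lorentzCross a c) := by
  simp [lorentzInner, lorentzCross, cross_apply]
  ring

section VectorHalfLaplacian

variable {d : ℕ} {u v : EuclideanSpace ℝ (Fin d) → Fin 3 → ℝ}

theorem integrable_vecHalfLap_mul (hu : ∀ i, IsSchwartz fun x => u x i)
    (hv : ∀ i, IsSchwartz fun x => v x i) (i : Fin 3) :
    Integrable fun x => vecHalfLap u x i * v x i := by
  obtain ⟨U, hU⟩ := hu i
  obtain ⟨V, hV⟩ := hv i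
  change Integrable fun x => halfLap (fun y => u y i) x * (fun y => v y i) x
  rw [hU, hV]
  exact integrable_halfLap_mul U V

theorem integral_vecHalfLap_mul_comm (hu : ∀ i, IsSchwartz fun x => u x i)
    (hv : ∀ i, IsSchwartz fun x => v x i) (i : Fin 3) :
    ∫ x, vecHalfLap u x i * v x i = ∫ x, vecHalfLap v x i * u x i := by
  obtain ⟨U, hU⟩ := hu i
  obtain ⟨V, hV⟩ := hv i
  change ∫ x, halfLap (fun y => u y i) x * (fun y => v y i) x
    = ∫ x, halfLap (fun y => v y i) x * (fun y => u y i) x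
  rw [hU, hV]
  exact integral_halfLap_mul_comm U V

theorem integrable_lorentzInner_vecHalfLap (hu : ∀ i, IsSchwartz fun x => u x i)
    (hv : ∀ i, IsSchwartz fun x => v x i) :
    Integrable fun x => lorentzInner (vecHalfLap u x) (v x) := by
  simp_rw [lorentzInner_eq_sum]
  exact integrable_finsetSum _ fun i _ => (integrable_vecHalfLap_mul hu hv i).const_mul _

theorem integral_lorentzInner_vecHalfLap_comm (hu : ∀ i, IsSchwartz fun x => u x i)
    (hv : ∀ i, IsSchwartz fun x => v x i) :
    ∫ x, lorentzInner (vecHalfLap u x) (v x) = ∫ x, lorentzInner (vecHalfLap v x) (u x) := by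
  simp_rw [lorentzInner_eq_sum]
  rw [integral_finsetSum _ fun i _ => (integrable_vecHalfLap_mul hu hv i).const_mul _,
    integral_finsetSum _ fun i _ => (integrable_vecHalfLap_mul hv hu i).const_mul _]
  refine Finset.sum_congr rfl fun i _ => ?_
  rw [integral_const_mul, integral_const_mul, integral_vecHalfLap_mul_comm hu hv i]

end VectorHalfLaplacian

variable {d : ℕ} {a b c : EuclideanSpace ℝ (Fin d) → Fin 3 → ℝ} in
theorem integral_lorentzInner_crossLeibnizDefect (ha : ∀ i, IsSchwartz fun x => a x i)
    (hb : ∀ i, IsSchwartz fun x => b x i) (hc : ∀ i, IsSchwartz fun x => c x i) :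
    ∫ x, lorentzInner (crossLeibnizDefect a b x) (c x)
      = (∫ x, lorentzInner (vecHalfLap c x) (lorentzCross (a x) (b x)))
        - (∫ x, lorentzInner (vecHalfLap a x) (lorentzCross (b x) (c x)))
        + ∫ x, lorentzInner (vecHalfLap b x) (lorentzCross (a x) (c x)) := by
  have hab := isSchwartz_lorentzCross ha hb
  have h₁ := integrable_lorentzInner_vecHalfLap hab hc
  have h₂ := integrable_lorentzInner_vecHalfLap ha (isSchwartz_lorentzCross hb hc)
  have h₃ := integrable_lorentzInner_vecHalfLap hb (isSchwartz_lorentzCross ha hc)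
  simp_rw [crossLeibnizDefect, lorentzInner_sub_lorentzCross_sub_lorentzCross]
  rw [integral_add _ h₃, integral_sub h₁ h₂, integral_lorentzInner_vecHalfLap_comm hab hc]
  exact h₁.sub h₂

theorem stmt14_general {d : ℕ}
    (a b c : EuclideanSpace ℝ (Fin d) → Fin 3 → ℝ)
    (ha : ∀ i, ∃ F : SchwartzMap (EuclideanSpace ℝ (Fin d)) ℝ, (fun x => a x i) = ⇑F)
    (hb : ∀ i, ∃ F : SchwartzMap (EuclideanSpace ℝ (Fin d)) ℝ, (fun x => b x i) = ⇑F)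
    (hc : ∀ i, ∃ F : SchwartzMap (EuclideanSpace ℝ (Fin d)) ℝ, (fun x => c x i) = ⇑F) :
    (∫ x, lorentzInner (crossLeibnizDefect a b x) (c x))
      = (∫ x, lorentzInner (crossLeibnizDefect a c x) (b x))
        + 2 * ∫ x, lorentzInner (lorentzCross (vecHalfLap a x) (c x)) (b x) := by
  have h_triple : ∫ x, lorentzInner (lorentzCross (vecHalfLap a x) (c x)) (b x)
      = ∫ x, lorentzInner (vecHalfLap a x) (lorentzCross (c x) (b x)) := by
    simp_rw [lorentzInner_lorentzCross]
  have h_anticomm : ∫ x, lorentzInner (vecHalfLap a x) (lorentzCross (c x) (b x))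
      = -∫ x, lorentzInner (vecHalfLap a x) (lorentzCross (b x) (c x)) := by
    rw [← integral_neg]
    simp_rw [lorentzCross_anticomm (b _), lorentzInner_neg_right]
  rw [integral_lorentzInner_crossLeibnizDefect ha hb hc,
    integral_lorentzInner_crossLeibnizDefect ha hc hb, h_triple, h_anticomm]
  ring

/-- Integration-by-parts identity for the cross-product Leibniz defect. -/
theorem stmt14 {d : ℕ} (hd : 1 ≤ d)
    (a b c : EuclideanSpace ℝ (Fin d) → Fin 3 → ℝ)
    (ha : ∀ i, ∃ F : SchwartzMap (EuclideanSpace ℝ (Fin d)) ℝ, (fun x => a x i) = ⇑F)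
    (hb : ∀ i, ∃ F : SchwartzMap (EuclideanSpace ℝ (Fin d)) ℝ, (fun x => b x i) = ⇑F)
    (hc : ∀ i, ∃ F : SchwartzMap (EuclideanSpace ℝ (Fin d)) ℝ, (fun x => c x i) = ⇑F) :
    (∫ x, lorentzInner (crossLeibnizDefect a b x) (c x))
      = (∫ x, lorentzInner (crossLeibnizDefect a c x) (b x))
        + 2 * ∫ x, lorentzInner (lorentzCross (vecHalfLap a x) (c x)) (b x) :=
  stmt14_general a b c ha hb hc
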